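/- For every x ∈ (0, π/2) and every integer m ≥ 2, |cos x - (sin x / x)³ - Σ_{k=2}^{m} (-1)^{k+1} A(k) x^{2k}| < A(m+1) x^{2m+2}. -/

import Mathlib

/-!
The identity `sin³ x = (3 sin x - sin 3x) / 4` turns the Taylor series of `sin` and `cos` into
`cos x - (sin x / x)³ = ∑ (-1)^(k+1) A(k) x^(2k)`, where `A(0) = A(1) = 0`. For `k ≥ 2` one has
`A(k+1) < (2/5) A(k)`, and `x² < π²/4 < 5/2`, so from index `m + 1` on the series alternates with
strictly decreasing terms; its remainder is then strictly smaller than its first term.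
-/

open Real Finset

/-- The coefficient `A(k) = (3^(2k+3) - 32k³ - 96k² - 88k - 27) / (4·(2k+3)!)`. -/
noncomputable def wchA (k : ℕ) : ℝ :=
  ((3 : ℝ) ^ (2 * k + 3) - 32 * (k : ℝ) ^ 3 - 96 * (k : ℝ) ^ 2 - 88 * (k : ℝ) - 27) /
    (4 * (Nat.factorial (2 * k + 3) : ℝ))

open scoped Nat

theorem StrictAnti.alternating_hasSum_mem_Ioo {c : ℕ → ℝ} {S : ℝ} (hc : StrictAnti c)
    (hS : HasSum (fun j => (-1) ^ j * c j) S) : S ∈ Set.Ioo 0 (c 0) := by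
  have hlim := hS.tendsto_sum_nat
  have hlow := hc.antitone.alternating_series_le_tendsto hlim 1
  have hup := hc.antitone.tendsto_le_alternating_series hlim 1
  norm_num [sum_range_succ] at hlow hup
  constructor <;> linarith [hc zero_lt_one, hc one_lt_two]

theorem HasSum.abs_sub_sum_range_lt_of_alternating {b : ℕ → ℝ} {S : ℝ} {n : ℕ}
    (hS : HasSum (fun k => (-1) ^ k * b k) S) (hb : StrictAnti fun j => b (j + n)) :
    |S - ∑ k ∈ range n, (-1) ^ k * b k| < b n := by
  have htail := ((hasSum_nat_add_iff' n).mpr hS).mul_left ((-1) ^ n)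
  have hsign (j : ℕ) : (-1 : ℝ) ^ n * ((-1) ^ (j + n) * b (j + n)) = (-1) ^ j * b (j + n) := by
    have hsq : (-1 : ℝ) ^ n * (-1) ^ n = 1 := by rw [← mul_pow]; simp
    linear_combination (-1) ^ j * b (j + n) * hsq
  simp only [hsign] at htail
  obtain ⟨hpos, hlt⟩ := hb.alternating_hasSum_mem_Ioo htail
  rw [← abs_of_pos hpos, abs_mul, abs_pow, abs_neg, abs_one, one_pow, one_mul] at hlt
  simpa using hlt

lemma two_mul_cubic_le_three_pow {k : ℕ} (hk : 2 ≤ k) :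
    2 * (32 * (k : ℝ) ^ 3 + 96 * k ^ 2 + 88 * k + 27) ≤ 3 ^ (2 * k + 3) := by
  induction k, hk using Nat.le_induction with
  | base => norm_num
  | succ n hn ih =>
    have hn' : (2 : ℝ) ≤ n := by exact_mod_cast hn
    rw [show 2 * (n + 1) + 3 = 2 * n + 3 + 2 by ring, pow_add]
    push_cast
    nlinarith

lemma wchA_eq_sub (k : ℕ) :
    wchA k = ((3 : ℝ) ^ (2 * k + 3) - 3) / (4 * (2 * k + 3)! : ℝ) - 1 / (2 * k)! := by
  have hfact : ((2 * k + 3)! : ℝ) = (2 * k + 1) * (2 * k + 2) * (2 * k + 3) * (2 * k)! := by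
    push_cast [Nat.factorial_succ]; ring
  rw [wchA, hfact]
  field_simp
  ring

lemma hasSum_sin_div_cube {x : ℝ} (hx : x ≠ 0) :
    HasSum (fun k : ℕ => (-1) ^ k * x ^ (2 * k) * (((3 : ℝ) ^ (2 * k + 3) - 3) / (4 * (2 * k + 3)! : ℝ)))
      ((sin x / x) ^ 3) := by
  have h := ((hasSum_sin x).mul_left 3).sub (hasSum_sin (3 * x))
  have h' := ((hasSum_nat_add_iff' 1).mpr h).mul_left (1 / (4 * x ^ 3))
  convert! h' using 2 with k
  · rw [pow_succ, mul_pow, show 2 * (k + 1) + 1 = 2 * k + 3 by ring]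
    field_simp
    ring
  · rw [sin_three_mul, sum_range_one]
    field_simp
    ring

lemma hasSum_sin_div_cube_sub_cos {x : ℝ} (hx : x ≠ 0) :
    HasSum (fun k : ℕ => (-1) ^ k * (wchA k * x ^ (2 * k))) ((sin x / x) ^ 3 - cos x) := by
  convert! (hasSum_sin_div_cube hx).sub (hasSum_cos x) using 2 with k
  rw [wchA_eq_sub]
  ring

lemma wchA_zero : wchA 0 = 0 := by norm_num [wchA]

lemma wchA_one : wchA 1 = 0 := by norm_num [wchA]

lemma wchA_pos {k : ℕ} (hk : 2 ≤ k) : 0 < wchA k := by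
  have h := two_mul_cubic_le_three_pow hk
  unfold wchA
  apply div_pos _ (by positivity)
  nlinarith [pow_pos (by norm_num : (0 : ℝ) < 3) (2 * k + 3)]

lemma wchA_succ_lt {k : ℕ} (hk : 2 ≤ k) : 5 / 2 * wchA (k + 1) < wchA k := by
  have h := two_mul_cubic_le_three_pow hk
  have hkr : (2 : ℝ) ≤ k := by exact_mod_cast hk
  have hfact : ((2 * (k + 1) + 3)! : ℝ) = (2 * k + 4) * (2 * k + 5) * (2 * k + 3)! := by
    push_cast [show 2 * (k + 1) + 3 = 2 * k + 3 + 1 + 1 by ring, Nat.factorial_succ]; ring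
  have hpow : (3 : ℝ) ^ (2 * (k + 1) + 3) = 9 * 3 ^ (2 * k + 3) := by ring
  have hf : (0 : ℝ) < (2 * k + 3)! := by positivity
  unfold wchA
  rw [hfact, hpow, mul_div_assoc', div_lt_div_iff₀ (by positivity) (by positivity)]
  push_cast
  nlinarith [mul_le_mul_of_nonneg_right h hf.le,
    mul_pos hf (pow_pos (by norm_num : (0 : ℝ) < 3) (2 * k + 3))]

lemma wchA_succ_mul_pow_lt {k : ℕ} (hk : 2 ≤ k) {x : ℝ} (hx : x ≠ 0) (hx2 : x ^ 2 ≤ 5 / 2) :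
    wchA (k + 1) * x ^ (2 * (k + 1)) < wchA k * x ^ (2 * k) := by
  have hpow : 0 < x ^ (2 * k) := by rw [pow_mul]; exact pow_pos (by positivity) k
  calc wchA (k + 1) * x ^ (2 * (k + 1)) = wchA (k + 1) * x ^ 2 * x ^ (2 * k) := by ring
    _ ≤ 5 / 2 * wchA (k + 1) * x ^ (2 * k) := by
        gcongr ?_ * _
        nlinarith [wchA_pos (k := k + 1) (by omega)]
    _ < wchA k * x ^ (2 * k) := by gcongr; exact wchA_succ_lt hk

lemma sum_Icc_two_eq_neg_sum_range (x : ℝ) {m : ℕ} (hm : 1 ≤ m) :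
    ∑ k ∈ Icc 2 m, (-1 : ℝ) ^ (k + 1) * wchA k * x ^ (2 * k) =
      -∑ k ∈ range (m + 1), (-1) ^ k * (wchA k * x ^ (2 * k)) := by
  rw [← sum_range_add_sum_Ico _ (show 2 ≤ m + 1 by omega), sum_range_succ, sum_range_one,
    wchA_zero, wchA_one, Ico_add_one_right_eq_Icc]
  simp only [zero_mul, mul_zero, zero_add, ← sum_neg_distrib]
  exact sum_congr rfl fun k _ => by ring

theorem cos_sub_sinx_div_x_cubed_error :
    ∀ x ∈ Set.Ioo (0 : ℝ) (π / 2), ∀ m : ℕ, 2 ≤ m →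
      |Real.cos x - (Real.sin x / x) ^ 3
          - ∑ k ∈ Finset.Icc 2 m, (-1 : ℝ) ^ (k + 1) * wchA k * x ^ (2 * k)|
        < wchA (m + 1) * x ^ (2 * m + 2) := by
  rintro x ⟨hx0, hxπ⟩ m hm
  have hx2 : x ^ 2 ≤ 5 / 2 := by nlinarith [pi_lt_d2]
  have hanti : StrictAnti fun j => wchA (j + (m + 1)) * x ^ (2 * (j + (m + 1))) :=
    strictAnti_nat_of_succ_lt fun j => by
      simpa only [add_right_comm j 1] using wchA_succ_mul_pow_lt (by omega) hx0.ne' hx2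
  have hrem := (hasSum_sin_div_cube_sub_cos hx0.ne').abs_sub_sum_range_lt_of_alternating hanti
  rw [sum_Icc_two_eq_neg_sum_range x (by omega), ← abs_neg]
  convert hrem using 2 <;> ring
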